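/- Let p be an odd prime, n a positive integer, and f : V_n → Z_{p^k} a generalized bent function whose dual f* is also generalized bent. Then f**(x) = f(−x) for all x ∈ V_n, where f** is the dual of f*. -/

import Mathlib

open Finset

/-!
Fourier inversion gives `ξ p^{n/2} ∑_a ε_f(a) ζ^{f*(a)} ζ_p^{-⟨x,a⟩} = p^n ζ^{f(-x)}`, while the
same sum without the signs `ε_f(a)` is `W_{f*}(x) = ξ ε_{f*}(x) p^{n/2} ζ^{f**(x)}`. As
`ε_f(a) ≡ 1 (mod 2)` in the ring of algebraic integers and `ξ² = ±1`, this gives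
`p^n (±ω - 1) ≡ 0 (mod 2)` for `ω = ζ^{f**(x) - f(-x)}`, and since `p` is odd, `ω ≡ 1 (mod 2)`.
An odd-order root of unity `ω ≠ 1` cannot satisfy this: summing `ω^j - 1 ≡ 0 (mod 2)` over
`j < m` would make `-m/2` an algebraic integer.
-/

/-- `chr m z = ζ_m ^ z`, the additive character sending `z ∈ ℤ/m` to `e^{2πi z/m}`. -/
noncomputable def chr (m : ℕ) (z : ZMod m) : ℂ :=
  Complex.exp (2 * Real.pi * Complex.I * (z.val : ℂ) / (m : ℂ))

/-- The Walsh transform of a generalized p-ary function `f : V_n → ℤ_{p^k}`,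
where `V_n = (ℤ/p)^n` with the usual dot product. -/
noncomputable def walsh (p k n : ℕ) [NeZero p] [NeZero (p ^ k)]
    (f : (Fin n → ZMod p) → ZMod (p ^ k)) (a : Fin n → ZMod p) : ℂ :=
  ∑ x : Fin n → ZMod p, chr (p ^ k) (f x) * chr p (-(∑ i, a i * x i))

/-- `ξ = 1` if `p ≡ 1 (mod 4)` or `n` even, `ξ = √-1` otherwise. -/
noncomputable def xi (p n : ℕ) : ℂ :=
  if p % 4 = 1 ∨ Even n then 1 else Complex.I

lemma chr_zero (m : ℕ) : chr m 0 = 1 := by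
  simp [chr]

section Character

variable (m : ℕ) [NeZero m]

lemma chr_eq_stdAddChar (z : ZMod m) : chr m z = ZMod.stdAddChar z := by
  rw [ZMod.stdAddChar_apply, ZMod.toCircle_apply]
  rfl

lemma chr_add (a b : ZMod m) : chr m (a + b) = chr m a * chr m b := by
  simp only [chr_eq_stdAddChar, AddChar.map_add_eq_mul]

lemma chr_mul_chr_neg (z : ZMod m) : chr m z * chr m (-z) = 1 := by
  rw [← chr_add, add_neg_cancel, chr_zero]

lemma chr_sum {ι : Type*} (s : Finset ι) (g : ι → ZMod m) :
    chr m (∑ i ∈ s, g i) = ∏ i ∈ s, chr m (g i) := by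
  induction s using Finset.cons_induction with
  | empty => exact chr_zero m
  | cons a s ha ih => rw [sum_cons, prod_cons, chr_add, ih]

lemma chr_eq_one_iff {z : ZMod m} : chr m z = 1 ↔ z = 0 := by
  rw [← chr_zero m, chr_eq_stdAddChar, chr_eq_stdAddChar, ZMod.injective_stdAddChar.eq_iff]

lemma chr_pow_self (z : ZMod m) : chr m z ^ m = 1 := by
  rw [chr_eq_stdAddChar, ← AddChar.map_nsmul_eq_pow, nsmul_eq_mul, ZMod.natCast_self, zero_mul,
    AddChar.map_zero_eq_one]

lemma isIntegral_chr (z : ZMod m) : IsIntegral ℤ (chr m z) :=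
  IsIntegral.of_pow (NeZero.pos m) (by rw [chr_pow_self]; exact isIntegral_one)

lemma sum_chr_dotProduct (n : ℕ) (z : Fin n → ZMod m) :
    ∑ a : Fin n → ZMod m, chr m (∑ i, a i * z i) = if z = 0 then (m : ℂ) ^ n else 0 := by
  simp_rw [chr_sum]
  rw [← Fintype.prod_sum fun i c ↦ chr m (c * z i)]
  simp_rw [chr_eq_stdAddChar, AddChar.sum_mulShift _ (ZMod.isPrimitive_stdAddChar m), ZMod.card,
    Nat.cast_ite, Nat.cast_zero, Fintype.prod_ite_zero, funext_iff, Pi.zero_apply, prod_const,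
    card_univ, Fintype.card_fin]

end Character

lemma walsh_inversion (p k n : ℕ) [NeZero p] [NeZero (p ^ k)]
    (f : (Fin n → ZMod p) → ZMod (p ^ k)) (x : Fin n → ZMod p) :
    ∑ a, walsh p k n f a * chr p (-(∑ i, x i * a i)) = (p : ℂ) ^ n * chr (p ^ k) (f (-x)) := by
  have hterm : ∀ y a : Fin n → ZMod p,
      chr (p ^ k) (f y) * chr p (-(∑ i, a i * y i)) * chr p (-(∑ i, x i * a i)) =
        chr (p ^ k) (f y) * chr p (∑ i, a i * (-(y + x)) i) := by
    intro y a
    rw [mul_assoc, ← chr_add, ← neg_add, ← sum_add_distrib, ← sum_neg_distrib]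
    simp only [Pi.neg_apply, Pi.add_apply]
    congr 3 with i
    ring
  simp_rw [walsh, sum_mul, hterm]
  rw [sum_comm]
  simp_rw [← mul_sum, sum_chr_dotProduct, neg_eq_zero, add_eq_zero_iff_eq_neg, mul_ite, mul_zero,
    sum_ite_eq', mem_univ, if_true, mul_comm]

lemma not_isIntegral_div_two_of_odd {K : Type*} [Field K] [CharZero K] {m : ℕ}
    (hm : Odd m) : ¬ IsIntegral ℤ ((m : K) / 2) := by
  intro h
  obtain ⟨j, hj⟩ := h.exists_int_iff_exists_rat.mp ⟨(m : ℚ) / 2, by push_cast; rfl⟩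
  have : (m : ℤ) = j * 2 := by
    rw [div_eq_iff two_ne_zero] at hj
    exact_mod_cast hj
  obtain ⟨l, rfl⟩ := hm
  omega

lemma eq_one_of_pow_eq_one_of_isIntegral_sub_one_div_two {K : Type*} [Field K] [CharZero K] {m : ℕ}
    (hm : Odd m) {ω : K} (hω : ω ^ m = 1) (h : IsIntegral ℤ ((ω - 1) / 2)) : ω = 1 := by
  by_contra hne
  have hωint : IsIntegral ℤ ω := IsIntegral.of_pow hm.pos (by rw [hω]; exact isIntegral_one)
  have hgeom : ∑ j ∈ range m, ω ^ j = 0 := by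
    have := geom_sum_mul ω m
    rw [hω, sub_self] at this
    exact (mul_eq_zero.mp this).resolve_right (sub_ne_zero.mpr hne)
  have hpow : ∀ j, IsIntegral ℤ ((ω ^ j - 1) / 2) := fun j ↦ by
    rw [← geom_sum_mul, mul_div_assoc]
    exact (IsIntegral.sum _ fun i _ ↦ hωint.pow i).mul h
  apply not_isIntegral_div_two_of_odd (K := K) hm
  have : (m : K) / 2 = -∑ j ∈ range m, (ω ^ j - 1) / 2 := by
    rw [← sum_div, sum_sub_distrib, hgeom, sum_const, card_range, nsmul_one, zero_sub, neg_div,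
      neg_neg]
  rw [this]
  exact (IsIntegral.sum _ fun j _ ↦ hpow j).neg

lemma isIntegral_div_two_of_odd_mul {K : Type*} [Field K] [CharZero K] {N : ℕ} (hN : Odd N)
    {z : K} (hz : IsIntegral ℤ z) (h : IsIntegral ℤ (N * z / 2)) : IsIntegral ℤ (z / 2) := by
  obtain ⟨l, rfl⟩ := hN
  have : z / 2 = ((2 * l + 1 : ℕ) : K) * z / 2 - l * z := by push_cast; ring
  rw [this]
  exact h.sub ((isIntegral_natCast l).mul hz)

lemma eq_zero_of_isIntegral_odd_mul_sign_chr_sub_one {m N : ℕ} [NeZero m] (hm : Odd m)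
    (hN : Odd N) {s : ℂ} (hs : s = 1 ∨ s = -1) {d : ZMod m}
    (h : IsIntegral ℤ (N * (s * chr m d - 1) / 2)) : d = 0 := by
  have hsω : IsIntegral ℤ ((s * chr m d - 1) / 2) := by
    refine isIntegral_div_two_of_odd_mul hN (IsIntegral.sub ?_ isIntegral_one) h
    rcases hs with rfl | rfl
    · simpa using isIntegral_chr m d
    · simpa using isIntegral_chr m d
  rw [← chr_eq_one_iff m]
  refine eq_one_of_pow_eq_one_of_isIntegral_sub_one_div_two hm (chr_pow_self m d) ?_
  rcases hs with rfl | rfl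
  · simpa using hsω
  · have : (chr m d - 1) / 2 = -((-1 * chr m d - 1) / 2) - 1 := by ring
    rw [this]
    exact hsω.neg.sub isIntegral_one

lemma isIntegral_div_two_walsh_sub_signed_sum (p k n : ℕ) [NeZero p] [NeZero (p ^ k)]
    (g : (Fin n → ZMod p) → ZMod (p ^ k)) (ε : (Fin n → ZMod p) → ℂ)
    (hε : ∀ a, ε a = 1 ∨ ε a = -1) (x : Fin n → ZMod p) :
    IsIntegral ℤ ((walsh p k n g x -
      ∑ a, ε a * chr (p ^ k) (g a) * chr p (-(∑ i, x i * a i))) / 2) := by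
  have : (walsh p k n g x - ∑ a, ε a * chr (p ^ k) (g a) * chr p (-(∑ i, x i * a i))) / 2 =
      ∑ a, (1 - ε a) / 2 * (chr (p ^ k) (g a) * chr p (-(∑ i, x i * a i))) := by
    rw [walsh, ← sum_sub_distrib, sum_div]
    refine sum_congr rfl fun a _ ↦ ?_
    ring
  rw [this]
  refine IsIntegral.sum _ fun a _ ↦
    IsIntegral.mul ?_ ((isIntegral_chr _ _).mul (isIntegral_chr _ _))
  rcases hε a with h | h <;> norm_num [h, isIntegral_zero, isIntegral_one]

lemma xi_sq_eq_one_or_eq_neg_one (p n : ℕ) : xi p n ^ 2 = 1 ∨ xi p n ^ 2 = -1 := by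
  unfold xi
  split_ifs <;> simp

lemma isIntegral_xi (p n : ℕ) : IsIntegral ℤ (xi p n) := by
  unfold xi
  split_ifs
  · exact isIntegral_one
  · exact Complex.isIntegral_int_I

theorem stmt_8_general (p k n : ℕ) [NeZero p] [NeZero (p ^ k)] (hodd : Odd p)
    (f fs fss : (Fin n → ZMod p) → ZMod (p ^ k))
    (εf εfs : (Fin n → ZMod p) → ℂ)
    (hεf : ∀ a, εf a = 1 ∨ εf a = -1) (hεfs : ∀ a, εfs a = 1 ∨ εfs a = -1)
    (hWf : ∀ a, walsh p k n f a =
      xi p n * εf a * (Real.sqrt ((p : ℝ) ^ n) : ℂ) * chr (p ^ k) (fs a))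
    (hWfs : ∀ a, walsh p k n fs a =
      xi p n * εfs a * (Real.sqrt ((p : ℝ) ^ n) : ℂ) * chr (p ^ k) (fss a)) :
    ∀ x, fss x = f (-x) := by
  intro x
  set R : ℂ := (Real.sqrt ((p : ℝ) ^ n) : ℂ)
  have hR : R ^ 2 = (p : ℂ) ^ n := by
    rw [← Complex.ofReal_pow, Real.sq_sqrt (by positivity)]; push_cast; rfl
  set E := ∑ a, εf a * chr (p ^ k) (fs a) * chr p (-(∑ i, x i * a i))
  have hE : xi p n * R * E = p ^ n * chr (p ^ k) (f (-x)) := by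
    rw [← walsh_inversion, mul_sum]
    refine sum_congr rfl fun a _ ↦ ?_
    rw [hWf]; ring
  have hs : xi p n ^ 2 * εfs x = 1 ∨ xi p n ^ 2 * εfs x = -1 := by
    rcases xi_sq_eq_one_or_eq_neg_one p n with h | h <;> rcases hεfs x with h' | h' <;> simp [h, h']
  refine sub_eq_zero.mp
    (eq_zero_of_isIntegral_odd_mul_sign_chr_sub_one (N := p ^ n) hodd.pow hodd.pow hs ?_)
  have hRint : IsIntegral ℤ R :=
    IsIntegral.of_pow two_pos (by rw [hR]; exact_mod_cast isIntegral_natCast (p ^ n))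
  have key : ((p ^ n : ℕ) : ℂ) * (xi p n ^ 2 * εfs x * chr (p ^ k) (fss x - f (-x)) - 1) / 2 =
      xi p n * R * ((walsh p k n fs x - E) / 2) * chr (p ^ k) (-f (-x)) := by
    rw [hWfs, sub_eq_add_neg (fss x), chr_add]
    push_cast
    linear_combination
      (-xi p n ^ 2 * εfs x * chr (p ^ k) (fss x) * chr (p ^ k) (-f (-x)) / 2) * hR
        + (chr (p ^ k) (-f (-x)) / 2) * hE + ((p : ℂ) ^ n / 2) * chr_mul_chr_neg (p ^ k) (f (-x))
  rw [key]
  exact (((isIntegral_xi p n).mul hRint).mul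
    (isIntegral_div_two_walsh_sub_signed_sum p k n fs εf hεf x)).mul (isIntegral_chr _ _)

theorem stmt_8 (p k n : ℕ) [NeZero p] [NeZero (p ^ k)] (hp : p.Prime) (hodd : Odd p)
    (hk : 1 ≤ k) (hn : 1 ≤ n)
    (f fs fss : (Fin n → ZMod p) → ZMod (p ^ k))
    (εf εfs : (Fin n → ZMod p) → ℂ)
    (hεf : ∀ a, εf a = 1 ∨ εf a = -1) (hεfs : ∀ a, εfs a = 1 ∨ εfs a = -1)
    (hWf : ∀ a, walsh p k n f a =
      xi p n * εf a * (Real.sqrt ((p : ℝ) ^ n) : ℂ) * chr (p ^ k) (fs a))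
    (hWfs : ∀ a, walsh p k n fs a =
      xi p n * εfs a * (Real.sqrt ((p : ℝ) ^ n) : ℂ) * chr (p ^ k) (fss a)) :
    ∀ x, fss x = f (-x) :=
  stmt_8_general p k n hodd f fs fss εf εfs hεf hεfs hWf hWfs
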